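/- Let 𝒩 be a nonempty set, k a field of characteristic 0, K = k((ε)), and φ : 𝒩 → k a function extended additively to words. Define the K-valued mould T by T^∅ = 1 and T^{n₁⋯n_r}(ε) = 1/((φ(n₁)+ε)(φ(n₁)+φ(n₂)+2ε)⋯(φ(n₁)+⋯+φ(n_r)+rε)). Then T is symmetral and satisfies ∇_Φ T = T × I_K, where (∇_Φ M)^{n̲}(ε) = (φ(n̲) + r(n̲)ε) M^{n̲}(ε) and I_K^{n̲} = 1 if r(n̲) = 1 and 0 otherwise. -/

import Mathlib

open scoped Classical

/-- Shuffle coefficient: the number of ways the word `n` can be obtained by interleaving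
the letters of `a` and `b` while preserving their internal orders. -/
noncomputable def sh {𝒩 : Type*} : List 𝒩 → List 𝒩 → List 𝒩 → ℕ
  | [], b, n => if b = n then 1 else 0
  | a, [], n => if a = n then 1 else 0
  | _ :: _, _ :: _, [] => 0
  | x :: a, y :: b, z :: n =>
      (if x = z then sh a (y :: b) n else 0) + (if y = z then sh (x :: a) b n else 0)

/-- Mould multiplication: `(M × N)^n = ∑_{n = a b} M^a N^b`. -/
noncomputable def mmul {𝒩 A : Type*} [Semiring A] (M N : List 𝒩 → A) : List 𝒩 → A :=
  fun n => ∑ i ∈ Finset.range (n.length + 1), M (n.take i) * N (n.drop i)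

/-- A mould `M` is symmetral if `M^∅ = 1` and
`∑_n sh^{a,b}_n M^n = M^a M^b` for all nonempty words `a`, `b`. -/
def Symmetral {𝒩 A : Type*} [CommSemiring A] (M : List 𝒩 → A) : Prop :=
  M [] = 1 ∧ ∀ a b : List 𝒩, a ≠ [] → b ≠ [] →
    (∑ᶠ n : List 𝒩, (sh a b n : A) * M n) = M a * M b

/-- Additive extension of `φ : 𝒩 → k` to words: `φ(n₁⋯n_r) = φ(n₁) + ⋯ + φ(n_r)`. -/
def phiw {𝒩 k : Type*} [AddCommMonoid k] (φ : 𝒩 → k) (l : List 𝒩) : k :=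
  (l.map φ).sum

/-- The mould `I`: value `1` on words of length `1`, and `0` otherwise. -/
noncomputable def Imould {𝒩 A : Type*} [Semiring A] : List 𝒩 → A :=
  fun n => if n.length = 1 then 1 else 0


/-- The indeterminate `ε` of `K = k((ε))`. -/
noncomputable def eps (k : Type*) [Field k] : LaurentSeries k :=
  HahnSeries.single (1 : ℤ) (1 : k)

/-- The mould `T`: `T^∅ = 1` and
`T^{n₁⋯n_r}(ε) = 1/((φ(n₁)+ε)(φ(n₁)+φ(n₂)+2ε)⋯(φ(n₁)+⋯+φ(n_r)+rε))`. -/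
noncomputable def Tdef {𝒩 k : Type*} [Field k] (φ : 𝒩 → k) (l : List 𝒩) :
    LaurentSeries k :=
  (∏ i ∈ Finset.range l.length,
      ((HahnSeries.C (phiw φ (l.take (i + 1))) : LaurentSeries k) + (i + 1 : ℕ) • eps k))⁻¹

/-!
Write `W(n̲) = φ(n̲) + r(n̲)ε` for the additive extension of the letter weights `φ(n) + ε`, so that
`T^{m x} = T^m / W(m x)` and `W` does not vanish on nonempty words; `∇_Φ T = T × I` is this
recursion read backwards. Symmetrality holds for every mould with such a recursion, by induction on
the last letters of the two words: a shuffle of `a x` and `b y` ends in `x` or in `y`, and all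
shuffles have the same weight `W(a x b y)`, so the shuffle sum is
`(T^a T^{b y} + T^{a x} T^b) / W(a x b y) = T^{a x} T^{b y} (W(a x) + W(b y)) / W(a x b y)`.
-/

section Shuffle
variable {𝒩 : Type*}

theorem sh_nil_left (b n : List 𝒩) : sh [] b n = if b = n then 1 else 0 := by
  cases b <;> cases n <;> simp [sh]

theorem sh_nil_right (a n : List 𝒩) : sh a [] n = if a = n then 1 else 0 := by
  cases a <;> cases n <;> simp [sh]

theorem perm_of_sh_ne_zero {a b n : List 𝒩} (h : sh a b n ≠ 0) : n.Perm (a ++ b) := by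
  induction n generalizing a b with
  | nil => cases a <;> cases b <;> simp_all [sh]
  | cons z n ih =>
    match a, b with
    | [], b => simp_all [sh_nil_left]
    | a, [] => simp_all [sh_nil_right]
    | x :: a, y :: b =>
      obtain ⟨rfl, hs⟩ | ⟨rfl, hs⟩ :
          (x = z ∧ sh a (y :: b) n ≠ 0) ∨ (y = z ∧ sh (x :: a) b n ≠ 0) := by
        simp only [sh] at h; split_ifs at h <;> grind
      · exact (ih hs).cons x
      · exact ((ih hs).cons y).trans List.perm_middle.symm

theorem sh_eq_zero_of_length_ne {a b n : List 𝒩} (h : n.length ≠ a.length + b.length) :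
    sh a b n = 0 := by
  by_contra h'
  exact h (by simpa using (perm_of_sh_ne_zero h').length_eq)

theorem sh_append_singleton (a b m : List 𝒩) (x y z : 𝒩) :
    sh (a ++ [x]) (b ++ [y]) (m ++ [z]) =
      (if x = z then sh a (b ++ [y]) m else 0) + (if y = z then sh (a ++ [x]) b m else 0) := by
  induction m generalizing a b with
  | nil =>
    rw [sh_eq_zero_of_length_ne, sh_eq_zero_of_length_ne, sh_eq_zero_of_length_ne] <;>
      simp <;> omega
  | cons w m ih =>
    have hcons (v : 𝒩) (b : List 𝒩) (t : 𝒩) :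
        v :: (b ++ [t]) = m ++ [z] ↔ v :: b = m ∧ t = z := by
      rw [← List.cons_append, List.append_singleton_inj]
    rcases a with _ | ⟨u, a⟩ <;> rcases b with _ | ⟨v, b⟩
    · simp only [List.nil_append, List.cons_append, sh, sh_nil_left, sh_nil_right,
        List.singleton_eq_append_iff]
      grind
    · have := ih [] b
      simp only [List.nil_append, List.cons_append, sh, sh_nil_left, hcons] at this ⊢
      grind
    · have := ih a []
      simp only [List.nil_append, List.cons_append, sh, sh_nil_right, hcons] at this ⊢
      grind
    · have h₁ := ih a (v :: b)
      have h₂ := ih (u :: a) b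
      simp only [List.cons_append] at h₁ h₂
      simp only [List.cons_append, sh, h₁, h₂]
      grind

end Shuffle

section Mould
variable {𝒩 A : Type*} [CommSemiring A]

theorem hasFiniteSupport_sh_mul (a b : List 𝒩) (f : List 𝒩 → A) :
    Function.HasFiniteSupport fun n => (sh a b n : A) * f n :=
  (a ++ b).permutations.toFinset.finite_toSet.subset fun n hn => by
    have : sh a b n ≠ 0 := fun h => hn (by simp [h])
    simpa using perm_of_sh_ne_zero this

theorem finsum_sh_append_singleton (M : List 𝒩 → A) (a b : List 𝒩) (x y : 𝒩) :
    ∑ᶠ n, (sh (a ++ [x]) (b ++ [y]) n : A) * M n =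
      ∑ᶠ m, (sh a (b ++ [y]) m : A) * M (m ++ [x]) +
        ∑ᶠ m, (sh (a ++ [x]) b m : A) * M (m ++ [y]) := by
  let lift (c d : List 𝒩) (x : 𝒩) : List 𝒩 → A :=
    (Set.range (· ++ [x])).indicator fun n => (sh c d n.dropLast : A) * M n
  have hlift (c d : List 𝒩) (x : 𝒩) :
      ∑ᶠ m, (sh c d m : A) * M (m ++ [x]) = ∑ᶠ n, lift c d x n := by
    rw [← finsum_mem_def, finsum_mem_range (List.append_left_injective [x])]
    simp only [List.dropLast_concat]
  have hfin (c d : List 𝒩) (x : 𝒩) : Function.HasFiniteSupport (lift c d x) := by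
    refine ((hasFiniteSupport_sh_mul c d fun m => M (m ++ [x])).image (· ++ [x])).subset ?_
    intro n hn
    obtain ⟨m, rfl⟩ := Set.mem_of_indicator_ne_zero hn
    refine ⟨m, ?_, rfl⟩
    simpa [lift] using hn
  rw [hlift, hlift, ← finsum_add_distrib (hfin _ _ _) (hfin _ _ _)]
  refine finsum_congr fun n => ?_
  rcases n.eq_nil_or_concat' with rfl | ⟨m, z, rfl⟩
  · simp [lift, sh_eq_zero_of_length_ne]
  · rw [sh_append_singleton]
    simp only [lift, Set.indicator_apply, Set.mem_range, List.append_singleton_inj,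
      exists_eq_left, List.dropLast_concat]
    split_ifs <;> simp_all [add_mul]

theorem finsum_sh_nil_left (M : List 𝒩 → A) (b : List 𝒩) :
    ∑ᶠ n, (sh [] b n : A) * M n = M b := by
  rw [finsum_eq_single _ b fun n hn => by simp [sh_nil_left, Ne.symm hn]]
  simp [sh_nil_left]

theorem finsum_sh_nil_right (M : List 𝒩 → A) (a : List 𝒩) :
    ∑ᶠ n, (sh a [] n : A) * M n = M a := by
  rw [finsum_eq_single _ a fun n hn => by simp [sh_nil_right, Ne.symm hn]]
  simp [sh_nil_right]

theorem mmul_Imould_nil (M : List 𝒩 → A) : mmul M Imould [] = 0 := by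
  simp [mmul, Imould]

theorem mmul_Imould_append_singleton (M : List 𝒩 → A) (m : List 𝒩) (x : 𝒩) :
    mmul M Imould (m ++ [x]) = M m := by
  rw [mmul, Finset.sum_eq_single_of_mem m.length (by simp)]
  · simp [Imould]
  · intro i hi hne
    have : ((m ++ [x]).drop i).length ≠ 1 := by simp at hi ⊢; omega
    rw [Imould, if_neg this, mul_zero]

end Mould

theorem phiw_append {𝒩 G : Type*} [AddCommMonoid G] (w : 𝒩 → G) (l₁ l₂ : List 𝒩) :
    phiw w (l₁ ++ l₂) = phiw w l₁ + phiw w l₂ := by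
  simp [phiw]

theorem phiw_perm {𝒩 G : Type*} [AddCommMonoid G] (w : 𝒩 → G) {l₁ l₂ : List 𝒩}
    (h : l₁.Perm l₂) : phiw w l₁ = phiw w l₂ :=
  (h.map w).sum_eq

section Weighted
variable {𝒩 K : Type*} [Field K] {w : 𝒩 → K} {M : List 𝒩 → K}

theorem sh_mul_append_singleton (hM : ∀ m x, M (m ++ [x]) = M m / phiw w (m ++ [x]))
    (a b m : List 𝒩) (x : 𝒩) :
    (sh a b m : K) * M (m ++ [x]) = (sh a b m : K) * M m / phiw w (a ++ b ++ [x]) := by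
  by_cases h : sh a b m = 0
  · simp [h]
  · rw [hM, phiw_append, phiw_append, phiw_perm w (perm_of_sh_ne_zero h), phiw_append,
      mul_div_assoc]

theorem finsum_sh_mul_eq_mul (hw : ∀ l ≠ [], phiw w l ≠ 0) (h0 : M [] = 1)
    (hM : ∀ m x, M (m ++ [x]) = M m / phiw w (m ++ [x])) (a b : List 𝒩) :
    ∑ᶠ n, (sh a b n : K) * M n = M a * M b := by
  induction a using List.reverseRecOn generalizing b with
  | nil => rw [finsum_sh_nil_left, h0, one_mul]
  | append_singleton a x iha =>
    induction b using List.reverseRecOn with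
    | nil => rw [finsum_sh_nil_right, h0, mul_one]
    | append_singleton b y ihb =>
      have hWa := hw (a ++ [x]) (by simp)
      have hWb := hw (b ++ [y]) (by simp)
      have hW := hw (a ++ [x] ++ (b ++ [y])) (by simp)
      have hx : phiw w (a ++ (b ++ [y]) ++ [x]) = phiw w (a ++ [x] ++ (b ++ [y])) := by
        simp only [phiw_append]; ring
      have hy : phiw w (a ++ [x] ++ b ++ [y]) = phiw w (a ++ [x] ++ (b ++ [y])) := by
        simp only [phiw_append]; ring
      rw [finsum_sh_append_singleton]
      simp_rw [sh_mul_append_singleton hM, hx, hy, div_eq_mul_inv]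
      rw [← finsum_mul, ← finsum_mul, iha, ihb, hM a x, hM b y]
      rw [phiw_append w (a ++ [x])] at hW ⊢
      field_simp

theorem symmetral_of_append_singleton (hw : ∀ l ≠ [], phiw w l ≠ 0) (h0 : M [] = 1)
    (hM : ∀ m x, M (m ++ [x]) = M m / phiw w (m ++ [x])) : Symmetral M :=
  ⟨h0, fun a b _ _ => finsum_sh_mul_eq_mul hw h0 hM a b⟩

theorem phiw_mul_eq_mmul_Imould (hw : ∀ l ≠ [], phiw w l ≠ 0)
    (hM : ∀ m x, M (m ++ [x]) = M m / phiw w (m ++ [x])) (l : List 𝒩) :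
    phiw w l * M l = mmul M Imould l := by
  rcases l.eq_nil_or_concat' with rfl | ⟨m, x, rfl⟩
  · simp [phiw, mmul_Imould_nil]
  · rw [mmul_Imould_append_singleton, hM, mul_div_cancel₀ _ (hw _ (by simp))]

end Weighted

section Laurent
variable {𝒩 k : Type*} [Field k]

noncomputable def phiEps (φ : 𝒩 → k) (n : 𝒩) : LaurentSeries k :=
  HahnSeries.C (φ n) + eps k

theorem phiw_phiEps (φ : 𝒩 → k) (l : List 𝒩) :
    phiw (phiEps φ) l = HahnSeries.C (phiw φ l) + l.length • eps k := by
  induction l with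
  | nil => simp [phiw]
  | cons n l ih =>
    simp only [phiw, List.map_cons, List.sum_cons] at ih ⊢
    rw [ih, phiEps, map_add, List.length_cons, succ_nsmul]
    abel

theorem phiw_phiEps_ne_zero [CharZero k] (φ : 𝒩 → k) {l : List 𝒩} (hl : l ≠ []) :
    phiw (phiEps φ) l ≠ 0 := by
  intro h
  have h1 := congrArg (fun f : LaurentSeries k => f.coeff 1) h
  simp only [phiw_phiEps, HahnSeries.coeff_add, HahnSeries.coeff_nsmul, Pi.smul_apply, eps,
    HahnSeries.coeff_single_same, HahnSeries.C_apply,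
    HahnSeries.coeff_single_of_ne one_ne_zero] at h1
  exact hl (by simpa using h1)

theorem Tdef_nil (φ : 𝒩 → k) : Tdef φ [] = 1 := by
  simp [Tdef]

theorem Tdef_eq_inv_prod (φ : 𝒩 → k) (l : List 𝒩) :
    Tdef φ l = (∏ i ∈ Finset.range l.length, phiw (phiEps φ) (l.take (i + 1)))⁻¹ := by
  rw [Tdef]
  congr 1
  refine Finset.prod_congr rfl fun i hi => ?_
  rw [phiw_phiEps, List.length_take, min_eq_left (Finset.mem_range.1 hi)]

theorem Tdef_append_singleton (φ : 𝒩 → k) (m : List 𝒩) (x : 𝒩) :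
    Tdef φ (m ++ [x]) = Tdef φ m / phiw (phiEps φ) (m ++ [x]) := by
  have hprefix : ∏ i ∈ Finset.range m.length, phiw (phiEps φ) ((m ++ [x]).take (i + 1)) =
      ∏ i ∈ Finset.range m.length, phiw (phiEps φ) (m.take (i + 1)) :=
    Finset.prod_congr rfl fun i hi => by
      rw [List.take_append_of_le_length (Finset.mem_range.1 hi)]
  rw [Tdef_eq_inv_prod, Tdef_eq_inv_prod, List.length_append, List.length_singleton,
    Finset.prod_range_succ, hprefix, List.take_of_length_le (by simp), mul_inv,
    div_eq_mul_inv]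

end Laurent

theorem T_symmetral_and_nablaPhi
    {𝒩 k : Type*} [Field k] [CharZero k] (φ : 𝒩 → k) :
    Symmetral (Tdef φ) ∧
    (fun l : List 𝒩 =>
        ((HahnSeries.C (phiw φ l) : LaurentSeries k) + l.length • eps k) * Tdef φ l) =
      mmul (Tdef φ) Imould := by
  have hw : ∀ l ≠ [], phiw (phiEps φ) l ≠ 0 := fun _ => phiw_phiEps_ne_zero φ
  refine ⟨symmetral_of_append_singleton hw (Tdef_nil φ) (Tdef_append_singleton φ),
    funext fun l => ?_⟩
  rw [← phiw_phiEps]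
  exact phiw_mul_eq_mmul_Imould hw (Tdef_append_singleton φ) l
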